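/- In the ring ℤ[ε₁,...,ε_n]/(ε₁^r,...,ε_n^r) with the coefficientwise partial order on canonical representatives, for any 1 ≤ d ≤ n one has ε₁ · ∏_{i=1}^{n-d}(ε_{i+1}+⋯+ε_{i+d}) ≤ ∏_{i=0}^{n-d}(ε_{i+1}+⋯+ε_{i+d}), and ∏_{i=0}^{n-d}(ε_{i+2}+⋯+ε_{i+d}) ≤ ∏_{i=0}^{n-d}(ε_{i+1}+⋯+ε_{i+d}). -/

import Mathlib

/-!
Both differences already have nonnegative coefficients in `ℤ[ε₁,…,ε_n]`. Splitting
`ε_{i+1}+⋯+ε_{i+d} = ε_{i+1} + (ε_{i+2}+⋯+ε_{i+d})`, the first difference is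
`(ε₂+⋯+ε_d) · ∏_{i=1}^{n-d}(ε_{i+1}+⋯+ε_{i+d})`, and the second is a difference of two
products of nonnegative factors, each factor of the first dominating the corresponding one of
the second.
Discarding the monomials with some exponent `≥ r` keeps the coefficients nonnegative and does not
change the class modulo `(ε₁^r,…,ε_n^r)`.
-/

open MvPolynomial

/-- P ≤ Q in ℤ[ε₁,…,ε_n]/(ε₁^r,…,ε_n^r): the difference Q - P is represented by a
polynomial with all exponents < r and nonnegative coefficients. -/
def ChowLe (n r : ℕ)
    (P Q : MvPolynomial (Fin n) ℤ ⧸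
      Ideal.span (Set.range fun i : Fin n => (X i : MvPolynomial (Fin n) ℤ) ^ r)) : Prop :=
  ∃ p : MvPolynomial (Fin n) ℤ,
    (∀ m ∈ p.support, ∀ i, m i < r) ∧ (∀ m, 0 ≤ p.coeff m) ∧ Ideal.Quotient.mk _ p = Q - P

section NonnegCoeffs

variable (σ R : Type*) [CommSemiring R] [PartialOrder R] [IsOrderedRing R]

def nonnegCoeffs : Subsemiring (MvPolynomial σ R) where
  carrier := {p | ∀ m, 0 ≤ p.coeff m}
  mul_mem' hp hq m := by
    classical
    rw [coeff_mul]
    exact Finset.sum_nonneg fun _ _ => mul_nonneg (hp _) (hq _)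
  one_mem' m := by
    classical
    rw [coeff_one]
    split_ifs <;> simp
  add_mem' hp hq m := by
    rw [coeff_add]
    exact add_nonneg (hp m) (hq m)
  zero_mem' m := by simp

variable {σ R}

lemma X_mem_nonnegCoeffs (i : σ) : X i ∈ nonnegCoeffs σ R := fun m => by
  classical
  rw [coeff_X]
  split_ifs <;> simp

end NonnegCoeffs

lemma Subsemiring.prod_sub_prod_mem {R ι : Type*} [CommRing R] (S : Subsemiring R)
    (s : Finset ι) {f g : ι → R} (hg : ∀ i ∈ s, g i ∈ S)
    (hfg : ∀ i ∈ s, f i - g i ∈ S) :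
    ∏ i ∈ s, f i - ∏ i ∈ s, g i ∈ S := by
  classical
  induction s using Finset.induction with
  | empty => simp
  | insert a s ha ih =>
    have hf : ∏ i ∈ s, f i ∈ S := S.prod_mem fun i hi => by
      simpa using S.add_mem (hfg i (s.mem_insert_of_mem hi)) (hg i (s.mem_insert_of_mem hi))
    have hsplit : ∏ i ∈ insert a s, f i - ∏ i ∈ insert a s, g i
        = (f a - g a) * ∏ i ∈ s, f i + g a * (∏ i ∈ s, f i - ∏ i ∈ s, g i) := by
      rw [Finset.prod_insert ha, Finset.prod_insert ha]
      ring
    rw [hsplit]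
    refine S.add_mem (S.mul_mem (hfg a (s.mem_insert_self a)) hf)
      (S.mul_mem (hg a (s.mem_insert_self a)) (ih ?_ ?_))
    · exact fun i hi => hg i (s.mem_insert_of_mem hi)
    · exact fun i hi => hfg i (s.mem_insert_of_mem hi)

lemma monomial_mem_span_X_pow {σ R : Type*} [CommSemiring R] {r : ℕ} {m : σ →₀ ℕ} {i : σ}
    (hi : r ≤ m i) (c : R) :
    monomial m c ∈ Ideal.span (Set.range fun i => (X i : MvPolynomial σ R) ^ r) := by
  have hm : monomial m c = X i ^ r * monomial (m - Finsupp.single i r) c := by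
    rw [X_pow_eq_monomial, monomial_mul, one_mul,
      add_tsub_cancel_of_le (Finsupp.single_le_iff.mpr hi)]
  rw [hm]
  exact Ideal.mul_mem_right _ _ (Ideal.subset_span ⟨i, rfl⟩)

lemma chowLe_mk_of_sub_mem {n r : ℕ} {p q : MvPolynomial (Fin n) ℤ}
    (hpq : q - p ∈ nonnegCoeffs (Fin n) ℤ) :
    ChowLe n r (Ideal.Quotient.mk _ p) (Ideal.Quotient.mk _ q) := by
  classical
  set f := q - p
  let reduced : (Fin n →₀ ℕ) → Prop := fun m => ∀ i, m i < r
  refine ⟨∑ m ∈ f.support with reduced m, monomial m (f.coeff m), fun m hm => ?_, fun m => ?_,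
    ?_⟩
  · obtain ⟨m', hm', hmm'⟩ := Finset.mem_biUnion.mp (support_sum hm)
    rw [Finset.mem_singleton.mp (support_monomial_subset hmm')]
    exact (Finset.mem_filter.mp hm').2
  · rw [coeff_sum]
    refine Finset.sum_nonneg fun m' _ => ?_
    rw [coeff_monomial]
    split_ifs
    exacts [hpq _, le_rfl]
  · have hsplit : f = (∑ m ∈ f.support with reduced m, monomial m (f.coeff m)) +
        ∑ m ∈ f.support with ¬reduced m, monomial m (f.coeff m) := by
      rw [Finset.sum_filter_add_sum_filter_not]
      exact f.as_sum
    rw [← map_sub, Ideal.Quotient.eq, ← neg_mem_iff, neg_sub, sub_eq_of_eq_add' hsplit]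
    refine Ideal.sum_mem _ fun m hm => ?_
    obtain ⟨i, hi⟩ := not_forall.mp (Finset.mem_filter.mp hm).2
    exact monomial_mem_span_X_pow (not_lt.mp hi) _

section WindowSums

variable {R : Type*} [CommRing R] (n : ℕ)

/-- `windowSum n s i` is `∑_{k ∈ s} ε_{i+k+1}`, with `ε_j := 0` for `j > n`. -/
noncomputable def windowSum (s : Finset ℕ) (i : ℕ) : MvPolynomial (Fin n) R :=
  ∑ k ∈ s, if h : i + k < n then X ⟨i + k, h⟩ else 0

lemma windowSum_range_eq_add {d : ℕ} (hd : 1 ≤ d) (i : ℕ) :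
    windowSum (R := R) n (Finset.range d) i
      = (if h : i < n then X ⟨i, h⟩ else 0) + windowSum n (Finset.Ico 1 d) i := by
  rw [windowSum, Finset.range_eq_Ico, Finset.sum_eq_sum_Ico_succ_bot hd]
  rfl

variable [PartialOrder R] [IsOrderedRing R]

lemma windowSum_mem_nonnegCoeffs (s : Finset ℕ) (i : ℕ) :
    windowSum (R := R) n s i ∈ nonnegCoeffs (Fin n) R := by
  refine Subsemiring.sum_mem _ fun k _ => ?_
  split_ifs
  exacts [X_mem_nonnegCoeffs _, Subsemiring.zero_mem _]

lemma windowSum_range_sub_Ico_mem {d : ℕ} (hd : 1 ≤ d) (i : ℕ) :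
    windowSum (R := R) n (Finset.range d) i - windowSum n (Finset.Ico 1 d) i
      ∈ nonnegCoeffs (Fin n) R := by
  rw [windowSum_range_eq_add n hd, add_sub_cancel_right]
  split_ifs
  exacts [X_mem_nonnegCoeffs _, Subsemiring.zero_mem _]

lemma prod_windowSum_sub_X_zero_mul_mem {d : ℕ} (hn : 1 ≤ n) (hd : 1 ≤ d) :
    ∏ i ∈ Finset.range (n - d + 1), windowSum (R := R) n (Finset.range d) i
      - X ⟨0, hn⟩ * ∏ i ∈ Finset.Icc 1 (n - d), windowSum n (Finset.range d) i
      ∈ nonnegCoeffs (Fin n) R := by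
  have hsplit : ∏ i ∈ Finset.range (n - d + 1), windowSum (R := R) n (Finset.range d) i
      = windowSum n (Finset.range d) 0 *
          ∏ i ∈ Finset.Icc 1 (n - d), windowSum n (Finset.range d) i := by
    rw [Finset.range_eq_Ico, Finset.prod_eq_prod_Ico_succ_bot (Nat.succ_pos _),
      Nat.succ_eq_add_one, Finset.Ico_add_one_right_eq_Icc]
  rw [hsplit, windowSum_range_eq_add n hd, dif_pos (show 0 < n from hn), add_mul,
    add_sub_cancel_left]
  exact Subsemiring.mul_mem _ (windowSum_mem_nonnegCoeffs n _ 0)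
    (Subsemiring.prod_mem _ fun i _ => windowSum_mem_nonnegCoeffs n _ i)

end WindowSums

theorem stmt_11_general (n r d : ℕ) (hn : 1 ≤ n) (hd1 : 1 ≤ d) :
    ChowLe n r
      ((Ideal.Quotient.mk _)
        ((X (⟨0, hn⟩ : Fin n) : MvPolynomial (Fin n) ℤ) *
          ∏ i ∈ Finset.Icc 1 (n - d), ∑ k ∈ Finset.range d,
            (if h : i + k < n then (X (⟨i + k, h⟩ : Fin n) : MvPolynomial (Fin n) ℤ) else 0)))
      ((Ideal.Quotient.mk _)
        (∏ i ∈ Finset.range (n - d + 1), ∑ k ∈ Finset.range d,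
          (if h : i + k < n then (X (⟨i + k, h⟩ : Fin n) : MvPolynomial (Fin n) ℤ) else 0)))
    ∧
    ChowLe n r
      ((Ideal.Quotient.mk _)
        (∏ i ∈ Finset.range (n - d + 1), ∑ k ∈ Finset.Ico 1 d,
          (if h : i + k < n then (X (⟨i + k, h⟩ : Fin n) : MvPolynomial (Fin n) ℤ) else 0)))
      ((Ideal.Quotient.mk _)
        (∏ i ∈ Finset.range (n - d + 1), ∑ k ∈ Finset.range d,
          (if h : i + k < n then (X (⟨i + k, h⟩ : Fin n) : MvPolynomial (Fin n) ℤ) else 0))) :=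
  ⟨chowLe_mk_of_sub_mem (prod_windowSum_sub_X_zero_mul_mem n hn hd1),
    chowLe_mk_of_sub_mem (Subsemiring.prod_sub_prod_mem _ _
      (fun i _ => windowSum_mem_nonnegCoeffs n _ i)
      (fun i _ => windowSum_range_sub_Ico_mem n hd1 i))⟩

/-- For 1 ≤ d ≤ n one has
ε₁ · ∏_{i=1}^{n-d} (ε_{i+1}+⋯+ε_{i+d}) ≤ ∏_{i=0}^{n-d} (ε_{i+1}+⋯+ε_{i+d}) and
∏_{i=0}^{n-d} (ε_{i+2}+⋯+ε_{i+d}) ≤ ∏_{i=0}^{n-d} (ε_{i+1}+⋯+ε_{i+d}).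
(0-indexed: ε_{k+1} is `X k`, so ε_{i+1}+⋯+ε_{i+d} = ∑_{k<d} X_{i+k}.) -/
theorem stmt_11 (n r d : ℕ) (hr : 2 ≤ r) (hn : 1 ≤ n) (hd1 : 1 ≤ d) (hdn : d ≤ n) :
    ChowLe n r
      ((Ideal.Quotient.mk _)
        ((X (⟨0, hn⟩ : Fin n) : MvPolynomial (Fin n) ℤ) *
          ∏ i ∈ Finset.Icc 1 (n - d), ∑ k ∈ Finset.range d,
            (if h : i + k < n then (X (⟨i + k, h⟩ : Fin n) : MvPolynomial (Fin n) ℤ) else 0)))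
      ((Ideal.Quotient.mk _)
        (∏ i ∈ Finset.range (n - d + 1), ∑ k ∈ Finset.range d,
          (if h : i + k < n then (X (⟨i + k, h⟩ : Fin n) : MvPolynomial (Fin n) ℤ) else 0)))
    ∧
    ChowLe n r
      ((Ideal.Quotient.mk _)
        (∏ i ∈ Finset.range (n - d + 1), ∑ k ∈ Finset.Ico 1 d,
          (if h : i + k < n then (X (⟨i + k, h⟩ : Fin n) : MvPolynomial (Fin n) ℤ) else 0)))
      ((Ideal.Quotient.mk _)
        (∏ i ∈ Finset.range (n - d + 1), ∑ k ∈ Finset.range d,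
          (if h : i + k < n then (X (⟨i + k, h⟩ : Fin n) : MvPolynomial (Fin n) ℤ) else 0))) :=
  stmt_11_general n r d hn hd1
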